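/- arXiv:1410.6956 — 2 statements merged into one kernel-verified Lean document; each statement's English description precedes it below -/
import Mathlib

section
/- Let μ be a probability measure on ℝ^{dN} × M₁ with ∫ |y| dμ(y,w) < ∞, set W̄ := ∫ (w ⊗ I_d) dμ(y,w) and z := ∫ (w ⊗ I_d) y dμ(y,w), and let α > 0 be such that α‖𝒥⊥W̄‖ < 1. If π is an invariant probability measure for the kernel P_α (P_α f(x) := ∫ f(α 𝒥⊥ (w ⊗ I_d)(x + y)) dμ(y,w)) with ∫ |x| dπ(x) < ∞, then its mean satisfies ∫ x dπ(x) = (α^{−1} I_{dN} − 𝒥⊥ W̄)^{−1} 𝒥⊥ z. -/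
/-! Pushing `π ⊗ μ` forward along the step map gives back `π`, so the mean `m` of `π` is the
mean of one step started from `π`. The step is affine in `x` and in `y`, so averaging first over
`(y, w)` and then over `x` gives `m = α 𝒥⊥ (W̄ m + z)`, i.e. `(α⁻¹ I − 𝒥⊥ W̄) m = 𝒥⊥ z`, and
`‖𝒥⊥ W̄‖ < α⁻¹` rules out the eigenvalue `α⁻¹` of `𝒥⊥ W̄`. Row-stochasticity keeps the entries
of `w ⊗ I_d` in `[0, 1]`, which makes every integral along the way finite. -/

open MeasureTheory ProbabilityTheory Filter Matrix Set
open scoped Kronecker Topology ENNReal NNReal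

noncomputable section

namespace DistSA

instance matMS {m n : Type*} : MeasurableSpace (Matrix m n ℝ) := by
  unfold Matrix; infer_instance

/-- The vector space `ℝ^{dN}`, coordinates indexed by pairs `(i, j)` where `i` is the agent. -/
abbrev EVec (N d : ℕ) := Fin N × Fin d → ℝ

/-- Euclidean norm on a finite product of copies of `ℝ`. -/
def enorm {ι : Type*} [Fintype ι] (x : ι → ℝ) : ℝ := Real.sqrt (∑ i, (x i) ^ 2)

/-- Spectral (operator) norm with respect to the Euclidean norm. -/
def specNorm {ι : Type*} [Fintype ι] (A : Matrix ι ι ℝ) : ℝ :=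
  sInf {c | 0 ≤ c ∧ ∀ x : ι → ℝ, enorm (A.mulVec x) ≤ c * enorm x}

/-- Spectral radius of a real matrix: largest modulus of a complex eigenvalue. -/
def specRad {ι : Type*} [Fintype ι] [DecidableEq ι] (A : Matrix ι ι ℝ) : ℝ :=
  sSup ((fun z : ℂ => ‖z‖) '' spectrum ℂ (A.map (algebraMap ℝ ℂ)))

variable (N d : ℕ)

/-- `J = (1/N) 𝟏𝟏ᵀ`, the orthogonal projector onto the span of the all-one vector. -/
def Jmat : Matrix (Fin N) (Fin N) ℝ := Matrix.of fun _ _ => (N : ℝ)⁻¹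

/-- `J⊥ = I_N - J`. -/
def Jperp : Matrix (Fin N) (Fin N) ℝ := 1 - Jmat N

/-- `w ⊗ I_d`, acting on `ℝ^{dN}`. -/
def Kro (w : Matrix (Fin N) (Fin N) ℝ) : Matrix (Fin N × Fin d) (Fin N × Fin d) ℝ :=
  w ⊗ₖ (1 : Matrix (Fin d) (Fin d) ℝ)

/-- `𝒥⊥ = J⊥ ⊗ I_d`. -/
def Jperpb : Matrix (Fin N × Fin d) (Fin N × Fin d) ℝ := Kro N d (Jperp N)

/-- `𝒥 = J ⊗ I_d`. -/
def Jb : Matrix (Fin N × Fin d) (Fin N × Fin d) ℝ := Kro N d (Jmat N)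

/-- `⟨x⟩ = (1/N)(𝟏ᵀ ⊗ I_d) x = (x₁ + ⋯ + x_N)/N`. -/
def avg (x : EVec N d) : Fin d → ℝ := fun j => (N : ℝ)⁻¹ * ∑ i, x (i, j)

/-- `𝟏 ⊗ ϑ`, the consensus vector with common value `ϑ`. -/
def emb (ϑ : Fin d → ℝ) : EVec N d := fun p => ϑ p.2

/-- Row-stochastic matrices: nonnegative entries, rows summing to 1. -/
def RowStochastic (w : Matrix (Fin N) (Fin N) ℝ) : Prop :=
  (∀ i j, 0 ≤ w i j) ∧ ∀ i, ∑ j, w i j = 1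

/-- One step of the normalized-disagreement Markov chain:
`x ↦ α 𝒥⊥ (w ⊗ I_d)(x + y)` for an observation `(y, w)`. -/
def stepFun (α : ℝ) (x : EVec N d) (p : EVec N d × Matrix (Fin N) (Fin N) ℝ) : EVec N d :=
  α • (Jperpb N d).mulVec ((Kro N d p.2).mulVec (x + p.1))

/-- `π` is an invariant probability measure for the kernel `P_α` driven by `μ`:
`π P_α = π`. -/
def IsInvariant (μ : Measure (EVec N d × Matrix (Fin N) (Fin N) ℝ)) (α : ℝ)
    (π : Measure (EVec N d)) : Prop :=
  ∀ A : Set (EVec N d), MeasurableSet A →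
    ∫⁻ x, (Measure.map (stepFun N d α x) μ) A ∂π = π A

/-- The kernel `P_α` acting on vector-valued functions. -/
def kerPV (μ : Measure (EVec N d × Matrix (Fin N) (Fin N) ℝ)) (α : ℝ)
    (f : EVec N d → EVec N d) : EVec N d → EVec N d :=
  fun x => ∫ p, f (stepFun N d α x p) ∂μ

/-- The kernel `P_α` acting on scalar functions. -/
def kerPS (μ : Measure (EVec N d × Matrix (Fin N) (Fin N) ℝ)) (α : ℝ)
    (g : EVec N d → ℝ) : EVec N d → ℝ :=
  fun x => ∫ p, g (stepFun N d α x p) ∂μ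

section Enorm

variable {ι : Type*} [Fintype ι]

lemma enorm_eq_norm_toLp (x : ι → ℝ) : enorm x = ‖WithLp.toLp 2 x‖ := by
  simp [enorm, EuclideanSpace.norm_eq, sq_abs]

lemma norm_le_enorm (x : ι → ℝ) : ‖x‖ ≤ enorm x := by
  rw [enorm_eq_norm_toLp]
  exact (pi_norm_le_iff_of_nonneg (norm_nonneg _)).2 fun i =>
    PiLp.norm_apply_le (WithLp.toLp 2 x) i

lemma enorm_smul (r : ℝ) (x : ι → ℝ) : enorm (r • x) = |r| * enorm x := by
  simp [enorm_eq_norm_toLp, norm_smul]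

lemma enorm_pos {x : ι → ℝ} (hx : x ≠ 0) : 0 < enorm x := by
  simpa [enorm_eq_norm_toLp] using hx

lemma exists_enorm_mulVec_le (A : Matrix ι ι ℝ) :
    ∃ c, 0 ≤ c ∧ ∀ x, enorm (A *ᵥ x) ≤ c * enorm x := by
  classical
  refine ⟨‖toEuclideanCLM (𝕜 := ℝ) A‖, norm_nonneg _, fun x => ?_⟩
  simpa [enorm_eq_norm_toLp] using (toEuclideanCLM (𝕜 := ℝ) A).le_opNorm (WithLp.toLp 2 x)

lemma isUnit_det_smul_one_sub_of_specNorm_lt [DecidableEq ι] {A : Matrix ι ι ℝ} {β : ℝ}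
    (h : specNorm A < β) : IsUnit (β • (1 : Matrix ι ι ℝ) - A).det := by
  obtain ⟨c, ⟨hc0, hc⟩, hcβ⟩ := exists_lt_of_csInf_lt (exists_enorm_mulVec_le A) h
  rw [isUnit_iff_ne_zero, Ne, ← exists_mulVec_eq_zero_iff]
  rintro ⟨v, hv, hAv⟩
  rw [sub_mulVec, smul_mulVec, one_mulVec, sub_eq_zero] at hAv
  have hβv := hc v
  rw [← hAv, enorm_smul] at hβv
  nlinarith [le_abs_self β, enorm_pos hv]

end Enorm

section Invariance

variable {X Y : Type*} [MeasurableSpace X] [MeasurableSpace Y] {π : Measure X} {μ : Measure Y}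
  {F : X → Y → X}

lemma map_uncurry_prod_eq [SFinite μ] (hF : Measurable (Function.uncurry F))
    (hinv : ∀ A, MeasurableSet A → ∫⁻ x, μ.map (F x) A ∂π = π A) :
    (π.prod μ).map (Function.uncurry F) = π := by
  ext A hA
  rw [Measure.map_apply hF hA, Measure.prod_apply (hF hA), ← hinv A hA]
  refine lintegral_congr fun x => ?_
  exact (Measure.map_apply (f := F x) (hF.comp measurable_prodMk_left) hA).symm

lemma integral_eq_integral_integral_of_map_eq [SFinite π] [SFinite μ] {E : Type*}
    [NormedAddCommGroup E] [NormedSpace ℝ E] (hF : Measurable (Function.uncurry F))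
    (hmap : (π.prod μ).map (Function.uncurry F) = π) {g : X → E} (hg : Integrable g π) :
    ∫ x, g x ∂π = ∫ x, ∫ y, g (F x y) ∂μ ∂π := by
  rw [← hmap] at hg
  calc ∫ x, g x ∂π = ∫ x, g x ∂(π.prod μ).map (Function.uncurry F) := by rw [hmap]
    _ = ∫ q, g (Function.uncurry F q) ∂(π.prod μ) := integral_map hF.aemeasurable hg.1
    _ = ∫ x, ∫ y, g (F x y) ∂μ ∂π :=
      integral_prod _ ((integrable_map_measure hg.1 hF.aemeasurable).1 hg)

end Invariance

section MatrixIntegral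

variable {Ω : Type*} [MeasurableSpace Ω] {μ : Measure Ω} {l m n : Type*} [Fintype l] [Fintype m]
  [Fintype n]

lemma integrable_of_lintegral_enorm_lt_top {f : Ω → n → ℝ} (hf : AEStronglyMeasurable f μ)
    (h : ∫⁻ ω, ENNReal.ofReal (enorm (f ω)) ∂μ < ⊤) : Integrable f μ := by
  refine ⟨hf, (lintegral_mono fun ω => ?_).trans_lt h⟩
  rw [← ofReal_norm]
  exact ENNReal.ofReal_le_ofReal (norm_le_enorm _)

lemma integrable_mulVec (A : Matrix m n ℝ) {f : Ω → n → ℝ} (hf : Integrable f μ) :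
    Integrable (fun ω => A *ᵥ f ω) μ :=
  (LinearMap.toContinuousLinearMap (mulVecLin A)).integrable_comp hf

lemma integral_mulVec (A : Matrix m n ℝ) {f : Ω → n → ℝ} (hf : Integrable f μ) :
    ∫ ω, A *ᵥ f ω ∂μ = A *ᵥ ∫ ω, f ω ∂μ :=
  (LinearMap.toContinuousLinearMap (mulVecLin A)).integral_comp_comm hf

lemma integral_smul_mulVec_mulVec_add_const [IsProbabilityMeasure μ] (r : ℝ) (A : Matrix l m ℝ)
    (B : Matrix m n ℝ) (c : m → ℝ) {f : Ω → n → ℝ} (hf : Integrable f μ) :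
    ∫ ω, r • A *ᵥ (B *ᵥ f ω + c) ∂μ = r • ((A * B) *ᵥ ∫ ω, f ω ∂μ + A *ᵥ c) := by
  have hBf := integrable_mulVec B hf
  have hBfc : Integrable (fun ω => B *ᵥ f ω + c) μ := hBf.add (integrable_const c)
  rw [integral_smul, integral_mulVec _ hBfc,
    integral_add hBf (integrable_const c), integral_mulVec _ hf, integral_const, probReal_univ,
    one_smul, mulVec_add, mulVec_mulVec]

lemma integrable_mulVec_const {K : Ω → Matrix m n ℝ}
    (hK : ∀ i j, Integrable (fun ω => K ω i j) μ) (x : n → ℝ) :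
    Integrable (fun ω => K ω *ᵥ x) μ :=
  Integrable.of_eval fun i => integrable_finsetSum _ fun j _ => (hK i j).mul_const (x j)

lemma integral_mulVec_const {K : Ω → Matrix m n ℝ}
    (hK : ∀ i j, Integrable (fun ω => K ω i j) μ) (x : n → ℝ) :
    ∫ ω, K ω *ᵥ x ∂μ = (of fun i j => ∫ ω, K ω i j ∂μ) *ᵥ x := by
  ext i
  rw [eval_integral (integrable_mulVec_const hK x).eval]
  simp only [mulVec, dotProduct, of_apply]
  rw [integral_finsetSum _ fun j _ => (hK i j).mul_const (x j)]
  simp_rw [integral_mul_const]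

lemma integrable_mulVec_of_norm_le {K : Ω → Matrix m n ℝ} {f : Ω → n → ℝ} {C : ℝ}
    (hKm : ∀ i j, AEStronglyMeasurable (fun ω => K ω i j) μ)
    (hKC : ∀ᵐ ω ∂μ, ∀ i j, ‖K ω i j‖ ≤ C) (hf : Integrable f μ) :
    Integrable (fun ω => K ω *ᵥ f ω) μ :=
  Integrable.of_eval fun i => integrable_finsetSum _ fun j _ =>
    (hf.eval j).bdd_mul (hKm i j) (hKC.mono fun _ h => h i j)

end MatrixIntegral

lemma eq_nonsing_inv_mulVec_of_eq_smul {ι : Type*} [Fintype ι] [DecidableEq ι]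
    {B : Matrix ι ι ℝ} {m c : ι → ℝ} {α : ℝ} (hα : α ≠ 0)
    (hB : IsUnit (α⁻¹ • (1 : Matrix ι ι ℝ) - B).det) (h : m = α • (B *ᵥ m + c)) :
    m = (α⁻¹ • (1 : Matrix ι ι ℝ) - B)⁻¹ *ᵥ c := by
  have hm : α⁻¹ • m = B *ᵥ m + c := by
    conv_lhs => rw [h, smul_smul, inv_mul_cancel₀ hα, one_smul]
  have hAm : (α⁻¹ • (1 : Matrix ι ι ℝ) - B) *ᵥ m = c := by
    rw [sub_mulVec, smul_mulVec, one_mulVec, hm, add_sub_cancel_left]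
  rw [← hAm, mulVec_mulVec, nonsing_inv_mul _ hB, one_mulVec]

section RowStochastic

variable {N d}

lemma RowStochastic.abs_apply_le_one {w : Matrix (Fin N) (Fin N) ℝ} (hw : RowStochastic N w)
    (i j : Fin N) : |w i j| ≤ 1 := by
  rw [abs_of_nonneg (hw.1 i j), ← hw.2 i]
  exact Finset.single_le_sum (fun k _ => hw.1 i k) (Finset.mem_univ j)

lemma RowStochastic.norm_kro_apply_le_one {w : Matrix (Fin N) (Fin N) ℝ}
    (hw : RowStochastic N w) (a b : Fin N × Fin d) : ‖Kro N d w a b‖ ≤ 1 := by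
  rw [Kro, kroneckerMap_apply, norm_mul, Real.norm_eq_abs, Real.norm_eq_abs]
  refine mul_le_one₀ (hw.abs_apply_le_one _ _) (abs_nonneg _) ?_
  rw [one_apply]
  split_ifs <;> simp

end RowStochastic

lemma measurable_kro_apply (a b : Fin N × Fin d) :
    Measurable fun w : Matrix (Fin N) (Fin N) ℝ => Kro N d w a b := by
  simp only [Kro, kroneckerMap_apply]
  fun_prop

lemma measurable_uncurry_stepFun (α : ℝ) : Measurable (Function.uncurry (stepFun N d α)) := by
  refine measurable_pi_lambda _ fun a => ?_
  simp only [Function.uncurry, stepFun, Pi.smul_apply, mulVec, dotProduct, Pi.add_apply,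
    smul_eq_mul]
  have := measurable_kro_apply N d
  fun_prop

section Observation

variable {N d} {μ : Measure (EVec N d × Matrix (Fin N) (Fin N) ℝ)}

lemma integrable_kro_apply [IsFiniteMeasure μ] (hμ : ∀ᵐ p ∂μ, RowStochastic N p.2)
    (a b : Fin N × Fin d) : Integrable (fun p => Kro N d p.2 a b) μ :=
  (integrable_const 1).mono'
    ((measurable_kro_apply N d a b).comp measurable_snd).aestronglyMeasurable
    (hμ.mono fun _ hw => hw.norm_kro_apply_le_one a b)

lemma integrable_kro_mulVec (hμ : ∀ᵐ p ∂μ, RowStochastic N p.2)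
    (hy : Integrable (fun p => p.1) μ) : Integrable (fun p => Kro N d p.2 *ᵥ p.1) μ :=
  integrable_mulVec_of_norm_le
    (fun a b => ((measurable_kro_apply N d a b).comp measurable_snd).aestronglyMeasurable)
    (hμ.mono fun _ hw => hw.norm_kro_apply_le_one) hy

lemma integral_stepFun (α : ℝ) (x : EVec N d)
    (hK : ∀ a b, Integrable (fun p => Kro N d p.2 a b) μ)
    (hKy : Integrable (fun p => Kro N d p.2 *ᵥ p.1) μ) :
    ∫ p, stepFun N d α x p ∂μ = α • Jperpb N d *ᵥ
      ((Matrix.of fun a b => ∫ p, Kro N d p.2 a b ∂μ) *ᵥ x +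
        fun a => ∫ p, (Kro N d p.2 *ᵥ p.1) a ∂μ) := by
  have hKx := integrable_mulVec_const hK x
  have hstep : (fun p => stepFun N d α x p) =
      fun p => α • Jperpb N d *ᵥ (Kro N d p.2 *ᵥ x + Kro N d p.2 *ᵥ p.1) := by
    unfold stepFun
    simp_rw [mulVec_add (Kro N d _)]
  have hsum : Integrable (fun p => Kro N d p.2 *ᵥ x + Kro N d p.2 *ᵥ p.1) μ := hKx.add hKy
  rw [hstep, integral_smul, integral_mulVec _ hsum, integral_add hKx hKy,
    integral_mulVec_const hK, ← funext (eval_integral hKy.eval)]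

end Observation

theorem invariant_measure_first_moment
    (μ : Measure (EVec N d × Matrix (Fin N) (Fin N) ℝ)) [IsProbabilityMeasure μ]
    (hM1 : ∀ᵐ p ∂μ, RowStochastic N p.2)
    (hmom1 : ∫⁻ p, ENNReal.ofReal (enorm p.1) ∂μ < ⊤)
    (Wbar : Matrix (Fin N × Fin d) (Fin N × Fin d) ℝ)
    (hWbar : Wbar = Matrix.of fun a b => ∫ p, Kro N d p.2 a b ∂μ)
    (z : EVec N d) (hz : z = fun a => ∫ p, (Kro N d p.2).mulVec p.1 a ∂μ)
    (α : ℝ) (hα : 0 < α) (hαW : α * specNorm (Jperpb N d * Wbar) < 1)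
    (π : Measure (EVec N d)) [IsProbabilityMeasure π]
    (hπinv : IsInvariant N d μ α π)
    (hπmom1 : ∫⁻ x, ENNReal.ofReal (enorm x) ∂π < ⊤) :
    (fun a => ∫ x, x a ∂π) =
      (α⁻¹ • (1 : Matrix (Fin N × Fin d) (Fin N × Fin d) ℝ) - Jperpb N d * Wbar)⁻¹.mulVec
        ((Jperpb N d).mulVec z) := by
  have hK := integrable_kro_apply hM1
  have hKy := integrable_kro_mulVec hM1
    (integrable_of_lintegral_enorm_lt_top measurable_fst.aestronglyMeasurable hmom1)
  have hx : Integrable (fun x : EVec N d => x) π :=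
    integrable_of_lintegral_enorm_lt_top aestronglyMeasurable_id hπmom1
  have hstep := measurable_uncurry_stepFun N d α
  have hmean : ∫ x, x ∂π = α • ((Jperpb N d * Wbar) *ᵥ ∫ x, x ∂π + Jperpb N d *ᵥ z) :=
    calc ∫ x, x ∂π = ∫ x, ∫ p, stepFun N d α x p ∂μ ∂π :=
          integral_eq_integral_integral_of_map_eq hstep (map_uncurry_prod_eq hstep hπinv) hx
      _ = ∫ x, α • Jperpb N d *ᵥ (Wbar *ᵥ x + z) ∂π := by
          simp_rw [integral_stepFun α _ hK hKy, hWbar, hz]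
      _ = _ := integral_smul_mulVec_mulVec_add_const α _ Wbar z hx
  have hdet : IsUnit (α⁻¹ • (1 : Matrix _ _ ℝ) - Jperpb N d * Wbar).det :=
    isUnit_det_smul_one_sub_of_specNorm_lt (by rwa [← mul_one α⁻¹, lt_inv_mul_iff₀ hα])
  rw [← funext (eval_integral hx.eval)]
  exact eq_nonsing_inv_mulVec_of_eq_smul hα.ne' hdet hmean

end DistSA
end
end

section
/- Let μ be a probability measure on ℝ^{dN} × M₁ with ∫ |y|² dμ(y,w) < ∞ such that, for μ-almost every (y,w), the matrix w is doubly stochastic (w𝟏 = 𝟏 and wᵀ𝟏 = 𝟏). Define W̄ := ∫ (w ⊗ I_d) dμ, z := ∫ (w ⊗ I_d) y dμ, and assume ‖𝒥⊥W̄‖ < 1. Set R(w) := (w ⊗ I_d) − W̄, υ(y,w) := (w ⊗ I_d) y − z, A := ((𝟏ᵀ/N) ⊗ I_d)(I_{dN} + W̄ (I_{dN} − 𝒥⊥W̄)^{−1} 𝒥⊥), ξ_x(y,w) := A (R(w) x + υ(y,w)), Ξ(x) := ∫ ξ_x ξ_xᵀ dμ, and let π be any probability measure on ℝ^{dN} with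 finite second moment. Then A = (𝟏ᵀ/N) ⊗ I_d, A R(w) = 0 for μ-almost every (y,w), and consequently U := ∫ Ξ(x) dπ(x) = ∫ ⟨y − ȳ⟩⟨y − ȳ⟩ᵀ dμ(y,w), where ȳ := ∫ y dμ(y,w). -/
/-! Every doubly stochastic `w` has column sums one, so `avgMat * (w ⊗ I) = avgMat`; integrating,
also `avgMat * W̄ = avgMat`, while `avgMat * 𝒥⊥ = 0`. Hence `avgMat` is a left fixed vector of
`I − 𝒥⊥W̄` and of its inverse, the correction term of `A` vanishes, `A R(w) = 0`, and
`ξ_x(y, w) = ⟨(w ⊗ I) y − z⟩ = ⟨y − ȳ⟩` does not depend on `x`. -/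

open MeasureTheory ProbabilityTheory Filter Matrix Set
open scoped Kronecker Topology ENNReal NNReal

noncomputable section

namespace DistSA

variable (N d : ℕ)

/-- `(𝟏ᵀ/N) ⊗ I_d`, the averaging matrix `ℝ^{dN} → ℝ^d`. -/
def avgMat : Matrix (Fin d) (Fin N × Fin d) ℝ :=
  Matrix.of fun j q => if q.2 = j then (N : ℝ)⁻¹ else 0

lemma mul_one_add_mul_inv_sub_mul_mul_eq_self {m n R : Type*} [Fintype n] [DecidableEq n]
    [CommRing R] {P : Matrix m n R} {W J : Matrix n n R} (hJ : P * J = 0) (hW : P * W = P) :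
    P * (1 + W * (1 - J * W)⁻¹ * J) = P := by
  set C := 1 - J * W
  have hPC : P * C = P := by
    rw [Matrix.mul_sub, Matrix.mul_one, ← Matrix.mul_assoc, hJ, Matrix.zero_mul, sub_zero]
  suffices P * C⁻¹ * J = 0 by
    rw [Matrix.mul_add, Matrix.mul_one, ← Matrix.mul_assoc, ← Matrix.mul_assoc, hW, this,
      add_zero]
  by_cases hC : IsUnit C.det
  · rw [← hPC, mul_nonsing_inv_cancel_right _ _ hC, hJ]
  · -- Mathlib's inverse of a singular matrix is `0`.
    rw [nonsing_inv_apply_not_isUnit _ hC, Matrix.mul_zero, Matrix.zero_mul]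

lemma abs_apply_le_enorm {ι : Type*} [Fintype ι] (x : ι → ℝ) (a : ι) : |x a| ≤ enorm x :=
  Real.abs_le_sqrt (Finset.single_le_sum (fun i _ => sq_nonneg (x i)) (Finset.mem_univ a))

section Algebra

variable {N d}

lemma avgMat_mulVec (v : EVec N d) : avgMat N d *ᵥ v = avg N d v := by
  funext j
  simp only [mulVec, dotProduct, avgMat, avg, of_apply, Fintype.sum_prod_type, ite_mul,
    zero_mul, Finset.sum_ite_eq', Finset.mem_univ, if_true, Finset.mul_sum]

lemma avgMat_mul_Kro {w : Matrix (Fin N) (Fin N) ℝ} (hw : ∀ j, ∑ i, w i j = 1) :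
    avgMat N d * Kro N d w = avgMat N d := by
  ext j ⟨k, l⟩
  simp only [mul_apply, avgMat, Kro, of_apply, kroneckerMap_apply, Fintype.sum_prod_type,
    one_apply, ite_mul, zero_mul, mul_ite, mul_one, mul_zero]
  by_cases h : l = j
  · subst h
    simp only [Finset.sum_ite_eq', Finset.mem_univ, if_true]
    rw [← Finset.mul_sum, hw k, mul_one]
  · simp [h]

lemma avgMat_mul_Jperpb : avgMat N d * Jperpb N d = 0 := by
  ext j ⟨k, l⟩
  have hN : (N : ℝ) ≠ 0 := Nat.cast_ne_zero.mpr k.pos.ne'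
  have hJ : avgMat N d * Kro N d (Jmat N) = avgMat N d := avgMat_mul_Kro fun _ => by
    simp [Jmat, hN]
  have hsplit : Kro N d (Jperp N) = 1 - Kro N d (Jmat N) := by
    rw [eq_sub_iff_add_eq, Kro, Kro, ← add_kronecker, Jperp, sub_add_cancel, one_kronecker_one]
  rw [Jperpb, hsplit, Matrix.mul_sub, Matrix.mul_one, hJ, sub_self]

lemma abs_le_one_of_rowStochastic {w : Matrix (Fin N) (Fin N) ℝ}
    (hw : RowStochastic N w) (i k : Fin N) : |w i k| ≤ 1 := by
  rw [abs_of_nonneg (hw.1 i k), ← hw.2 i]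
  exact Finset.single_le_sum (fun j _ => hw.1 i j) (Finset.mem_univ k)

lemma abs_Kro_apply_le_one {w : Matrix (Fin N) (Fin N) ℝ} (hw : RowStochastic N w)
    (a b : Fin N × Fin d) : |Kro N d w a b| ≤ 1 := by
  rw [Kro, kroneckerMap_apply, abs_mul, ← mul_one (1 : ℝ)]
  refine mul_le_mul (abs_le_one_of_rowStochastic hw _ _) ?_ (abs_nonneg _) zero_le_one
  rw [one_apply]
  split_ifs <;> simp

end Algebra

section Integrals

variable {Ω : Type*} [MeasurableSpace Ω] {μ : Measure Ω}

lemma integrable_apply_of_lintegral_enorm_sq_lt_top [IsFiniteMeasure μ] {ι : Type*}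
    [Fintype ι] {Y : Ω → ι → ℝ} (hY : Measurable Y)
    (hmom2 : ∫⁻ ω, ENNReal.ofReal (enorm (Y ω) ^ 2) ∂μ < ⊤) (a : ι) :
    Integrable (fun ω => Y ω a) μ := by
  have hm : Measurable fun ω => enorm (Y ω) := by unfold enorm; fun_prop
  have hsq : Integrable (fun ω => enorm (Y ω) ^ 2) μ :=
    ⟨(hm.pow_const 2).aestronglyMeasurable,
      (hasFiniteIntegral_iff_ofReal (ae_of_all _ fun ω => by positivity)).2 hmom2⟩
  have hL1 : Integrable (fun ω => enorm (Y ω)) μ :=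
    ((memLp_two_iff_integrable_sq hm.aestronglyMeasurable).2 hsq).integrable one_le_two
  exact hL1.mono' ((measurable_pi_apply a).comp hY).aestronglyMeasurable
    (ae_of_all _ fun ω => abs_apply_le_enorm (Y ω) a)

lemma dotProduct_integral {ι : Type*} [Fintype ι] (v : ι → ℝ) {f : Ω → ι → ℝ}
    (hf : ∀ a, Integrable (fun ω => f ω a) μ) :
    v ⬝ᵥ (fun a => ∫ ω, f ω a ∂μ) = ∫ ω, v ⬝ᵥ f ω ∂μ := by
  simp only [dotProduct]
  rw [integral_finsetSum _ fun a _ => (hf a).const_mul (v a)]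
  simp_rw [integral_const_mul]

variable {N d} {W : Ω → Matrix (Fin N) (Fin N) ℝ}

lemma measurable_Kro_apply (hW : Measurable W) (a b : Fin N × Fin d) :
    Measurable fun ω => Kro N d (W ω) a b := by
  simp only [Kro, kroneckerMap_apply]
  fun_prop

lemma integrable_Kro_apply [IsFiniteMeasure μ] (hW : Measurable W)
    (hsto : ∀ᵐ ω ∂μ, RowStochastic N (W ω)) (a b : Fin N × Fin d) :
    Integrable (fun ω => Kro N d (W ω) a b) μ :=
  (integrable_const 1).mono' (measurable_Kro_apply hW a b).aestronglyMeasurable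
    (hsto.mono fun _ hw => abs_Kro_apply_le_one hw a b)

lemma integrable_Kro_mulVec_apply (hW : Measurable W) (hsto : ∀ᵐ ω ∂μ, RowStochastic N (W ω))
    {Y : Ω → EVec N d} (hY : ∀ a, Integrable (fun ω => Y ω a) μ) (a : Fin N × Fin d) :
    Integrable (fun ω => (Kro N d (W ω) *ᵥ Y ω) a) μ := by
  simp only [mulVec, dotProduct]
  exact integrable_finsetSum _ fun b _ => (hY b).bdd_mul
    (measurable_Kro_apply hW a b).aestronglyMeasurable
    (hsto.mono fun _ hw => abs_Kro_apply_le_one hw a b)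

variable (hW : Measurable W) (hsto : ∀ᵐ ω ∂μ, RowStochastic N (W ω))
  (hcol : ∀ᵐ ω ∂μ, ∀ j, ∑ i, W ω i j = 1)
include hW hsto hcol

lemma avgMat_mul_integral_Kro [IsProbabilityMeasure μ] :
    avgMat N d * (Matrix.of fun a b => ∫ ω, Kro N d (W ω) a b ∂μ) = avgMat N d := by
  ext j q
  simp only [mul_apply', of_apply]
  rw [dotProduct_integral _ fun a => integrable_Kro_apply hW hsto a q]
  have hrow : ∀ᵐ ω ∂μ, avgMat N d j ⬝ᵥ (fun a => Kro N d (W ω) a q) = avgMat N d j q :=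
    hcol.mono fun ω hw => by rw [← mul_apply', avgMat_mul_Kro hw]
  rw [integral_congr_ae hrow, integral_const, probReal_univ, one_smul]

lemma avgMat_mulVec_integral_Kro_mulVec {Y : Ω → EVec N d}
    (hY : ∀ a, Integrable (fun ω => Y ω a) μ) :
    avgMat N d *ᵥ (fun a => ∫ ω, (Kro N d (W ω) *ᵥ Y ω) a ∂μ) =
      avgMat N d *ᵥ (fun a => ∫ ω, Y ω a ∂μ) := by
  ext j
  rw [mulVec, mulVec, dotProduct_integral _ (integrable_Kro_mulVec_apply hW hsto hY),
    dotProduct_integral _ hY]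
  refine integral_congr_ae (hcol.mono fun ω hw => ?_)
  change (avgMat N d *ᵥ (Kro N d (W ω) *ᵥ Y ω)) j = (avgMat N d *ᵥ Y ω) j
  rw [mulVec_mulVec, avgMat_mul_Kro hw]

end Integrals

theorem doubly_stochastic_covariance
    (μ : Measure (EVec N d × Matrix (Fin N) (Fin N) ℝ)) [IsProbabilityMeasure μ]
    (hM1 : ∀ᵐ p ∂μ, RowStochastic N p.2)
    (hDS : ∀ᵐ p ∂μ, ∀ j, ∑ i, p.2 i j = 1)
    (hmom2 : ∫⁻ p, ENNReal.ofReal (enorm p.1 ^ 2) ∂μ < ⊤)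
    (Wbar : Matrix (Fin N × Fin d) (Fin N × Fin d) ℝ)
    (hWbar : Wbar = Matrix.of fun a b => ∫ p, Kro N d p.2 a b ∂μ)
    (z : EVec N d) (hz : z = fun a => ∫ p, (Kro N d p.2).mulVec p.1 a ∂μ)
    (R : Matrix (Fin N) (Fin N) ℝ → Matrix (Fin N × Fin d) (Fin N × Fin d) ℝ)
    (hR : R = fun w => Kro N d w - Wbar)
    (υ : EVec N d × Matrix (Fin N) (Fin N) ℝ → EVec N d)
    (hυ : υ = fun p => (Kro N d p.2).mulVec p.1 - z)
    (Astar : Matrix (Fin d) (Fin N × Fin d) ℝ)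
    (hAstar : Astar = avgMat N d *
      (1 + Wbar * ((1 : Matrix (Fin N × Fin d) (Fin N × Fin d) ℝ)
          - Jperpb N d * Wbar)⁻¹ * Jperpb N d))
    (ξ : EVec N d → EVec N d × Matrix (Fin N) (Fin N) ℝ → Fin d → ℝ)
    (hξ : ξ = fun x p => Astar.mulVec ((R p.2).mulVec x + υ p))
    (Ξ : EVec N d → Matrix (Fin d) (Fin d) ℝ)
    (hΞ : Ξ = fun x => Matrix.of fun j k => ∫ p, ξ x p j * ξ x p k ∂μ)
    (π : Measure (EVec N d)) [IsProbabilityMeasure π]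
    (ybar : EVec N d) (hybar : ybar = fun a => ∫ p, p.1 a ∂μ) :
    Astar = avgMat N d ∧
      (∀ᵐ p ∂μ, Astar * R p.2 = 0) ∧
      (Matrix.of fun j k => ∫ x, Ξ x j k ∂π) =
        Matrix.of (fun j k => ∫ p, avg N d (p.1 - ybar) j * avg N d (p.1 - ybar) k ∂μ) := by
  have hY := integrable_apply_of_lintegral_enorm_sq_lt_top measurable_fst hmom2
  have hWbar_avg : avgMat N d * Wbar = avgMat N d := by
    rw [hWbar]; exact avgMat_mul_integral_Kro measurable_snd hM1 hDS
  have hz_avg : avgMat N d *ᵥ z = avgMat N d *ᵥ ybar := by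
    rw [hz, hybar]; exact avgMat_mulVec_integral_Kro_mulVec measurable_snd hM1 hDS hY
  have hA : Astar = avgMat N d := by
    rw [hAstar]; exact mul_one_add_mul_inv_sub_mul_mul_eq_self avgMat_mul_Jperpb hWbar_avg
  have hAR : ∀ᵐ p ∂μ, Astar * R p.2 = 0 := by
    filter_upwards [hDS] with p hcol
    rw [hA, hR, Matrix.mul_sub, avgMat_mul_Kro hcol, hWbar_avg, sub_self]
  have hξ_avg : ∀ x, ∀ᵐ p ∂μ, ξ x p = avg N d (p.1 - ybar) := fun x => by
    filter_upwards [hAR, hDS] with p hAR hcol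
    simp only [hξ, hυ]
    rw [mulVec_add, mulVec_mulVec, hAR, zero_mulVec, zero_add, mulVec_sub,
      mulVec_mulVec, hA, avgMat_mul_Kro hcol, hz_avg, ← mulVec_sub, avgMat_mulVec]
  have hΞ_const : ∀ x j k, Ξ x j k = ∫ p, avg N d (p.1 - ybar) j * avg N d (p.1 - ybar) k ∂μ :=
    fun x j k => by
      simp only [hΞ, of_apply]
      exact integral_congr_ae ((hξ_avg x).mono fun p hp => by simp only [hp])
  refine ⟨hA, hAR, ?_⟩
  ext j k
  simp only [of_apply, hΞ_const, integral_const, probReal_univ, one_smul]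

end DistSA
end
end
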